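/- arXiv:1012.4615 — 2 statements merged into one kernel-verified Lean document; each statement's English description precedes it below -/
import Mathlib

section
/- For $\overline{f}_i=\prod_{\ell\ne i}(x-\alpha_\ell)^{d_\ell}$ and any $k\ge 0$, the $k$-th derivative of $1/\overline{f}_i$ at $\alpha_i$ equals $(-1)^k k!\sum_{k_1+\cdots+\widehat{k_i}+\cdots+k_m=k}\prod_{\ell\ne i}\frac{\binom{d_\ell-1+k_\ell}{k_\ell}}{(\alpha_i-\alpha_\ell)^{d_\ell+k_\ell}}$. -/
/-!
Write `1 / f̄ᵢ` as the product of the factors `(x - α_ℓ)^(-d_ℓ)`, each smooth near `αᵢ`.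
The general Leibniz rule in divided form,
`D^k(∏ f_ℓ) / k! = ∑_{∑ κ_ℓ = k} ∏ D^{κ_ℓ} f_ℓ / κ_ℓ!`,
reduces the claim to a single factor, for which
`D^κ (x - a)^(-d) / κ! = (-1)^κ binom(d - 1 + κ, κ) (x - a)^(-(d + κ))`
because `-d (-d - 1) ⋯ (-d - κ + 1) = (-1)^κ κ! binom(d - 1 + κ, κ)`.
The signs then multiply to `(-1)^k`.
-/

open Finset

/-- The tuples `(k_ℓ)_{ℓ ≠ i}` of nonnegative integers summing to `k`
(encoded as functions on `Fin m` vanishing at `i`). -/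
def holeTuples (m : ℕ) (i : Fin m) (k : ℕ) : Finset (Fin m → ℕ) :=
  (Fintype.piFinset fun _ : Fin m => Finset.range (k + 1)).filter
    fun κ => κ i = 0 ∧ ∑ ℓ, κ ℓ = k

open scoped Nat

theorem prod_range_neg_succ_sub {R : Type*} [CommRing R] (e k : ℕ) :
    ∏ j ∈ range k, (((-(e + 1) : ℤ) : R) - j) = (-1) ^ k * k ! * (e + k).choose k := by
  calc ∏ j ∈ range k, (((-(e + 1) : ℤ) : R) - j) = ∏ j ∈ range k, (-1) * ((e + 1 + j : ℕ) : R) :=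
        prod_congr rfl fun j _ => by push_cast; ring
    _ = (-1) ^ k * k ! * (e + k).choose k := by
        rw [prod_mul_distrib, prod_const, card_range, ← Nat.cast_prod,
          ← Nat.ascFactorial_eq_prod_range, Nat.ascFactorial_eq_factorial_mul_choose]
        push_cast
        ring

section
variable {𝕜 : Type*} [NontriviallyNormedField 𝕜] [CharZero 𝕜]

theorem iteratedDeriv_fun_mul_div_factorial {f g : 𝕜 → 𝕜} {x : 𝕜} {n : ℕ}
    (hf : ContDiffAt 𝕜 n f x) (hg : ContDiffAt 𝕜 n g x) :
    iteratedDeriv n (fun y => f y * g y) x / n ! =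
      ∑ p ∈ antidiagonal n, iteratedDeriv p.1 f x / p.1 ! * (iteratedDeriv p.2 g x / p.2 !) := by
  rw [iteratedDeriv_fun_mul hf hg, sum_div, Nat.sum_antidiagonal_eq_sum_range_succ_mk]
  refine sum_congr rfl fun j hj => ?_
  have hn : (n ! : 𝕜) ≠ 0 := Nat.cast_ne_zero.mpr n.factorial_ne_zero
  rw [Nat.cast_choose 𝕜 (Nat.lt_succ_iff.mp (mem_range.mp hj))]
  field_simp

theorem iteratedDeriv_finset_prod_div_factorial {ι : Type*} [DecidableEq ι] (s : Finset ι)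
    {f : ι → 𝕜 → 𝕜} {x : 𝕜} {n : ℕ} (hf : ∀ j ∈ s, ContDiffAt 𝕜 n (f j) x) :
    iteratedDeriv n (fun y => ∏ j ∈ s, f j y) x / n ! =
      ∑ κ ∈ s.piAntidiag n, ∏ j ∈ s, iteratedDeriv (κ j) (f j) x / (κ j)! := by
  induction s using Finset.cons_induction generalizing n with
  | empty => rcases n with _ | n <;> simp [iteratedDeriv_const]
  | cons i s hi ih =>
    simp only [prod_cons]
    rw [iteratedDeriv_fun_mul_div_factorial (hf i (mem_cons_self ..))
      (contDiffAt_prod fun j hj => hf j (mem_cons_of_mem hj)), piAntidiag_cons hi, sum_disjiUnion]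
    refine sum_congr rfl fun p hp => ?_
    have hp₂ : (p.2 : WithTop ℕ∞) ≤ n := by exact_mod_cast HasAntidiagonal.antidiagonal.snd_le hp
    rw [ih fun j hj => (hf j (mem_cons_of_mem hj)).of_le hp₂, mul_sum, sum_map]
    refine sum_congr rfl fun κ hκ => ?_
    have hκi : κ i = 0 := by_contra fun h => hi ((mem_piAntidiag.mp hκ).2 i h)
    simp only [addRightEmbedding_apply, Pi.add_apply, if_true, hκi, zero_add]
    congr 1
    refine prod_congr rfl fun j hj => ?_
    rw [if_neg (ne_of_mem_of_not_mem hj hi), add_zero]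

theorem iteratedDeriv_inv_sub_pow_div_factorial (a x : 𝕜) {d : ℕ} (hd : 1 ≤ d) (k : ℕ) :
    iteratedDeriv k (fun y => ((y - a) ^ d)⁻¹) x / k ! =
      (-1) ^ k * ((d - 1 + k).choose k) / (x - a) ^ (d + k) := by
  obtain ⟨e, rfl⟩ := Nat.exists_eq_add_of_le' hd
  have hzpow : (fun y => ((y - a) ^ (e + 1))⁻¹) = fun y => (y - a) ^ (-(e + 1 : ℤ)) := by
    funext y
    rw [zpow_neg, ← Nat.cast_succ, zpow_natCast]
  have hk : (k ! : 𝕜) ≠ 0 := Nat.cast_ne_zero.mpr k.factorial_ne_zero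
  rw [hzpow, iteratedDeriv_comp_sub_const k (· ^ (-(e + 1 : ℤ))), iteratedDeriv_eq_iterate]
  dsimp only
  rw [iter_deriv_zpow, prod_range_neg_succ_sub, Nat.add_sub_cancel,
    show -(e + 1 : ℤ) - k = -((e + 1 + k : ℕ) : ℤ) by push_cast; ring, zpow_neg, zpow_natCast]
  field_simp
end

theorem holeTuples_eq_piAntidiag (m : ℕ) (i : Fin m) (k : ℕ) :
    holeTuples m i k = (univ.erase i).piAntidiag k := by
  ext κ
  have hsplit := add_sum_erase univ κ (mem_univ i)
  simp only [holeTuples, mem_filter, Fintype.mem_piFinset, mem_range, mem_piAntidiag, mem_erase,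
    mem_univ, and_true]
  constructor
  · rintro ⟨-, hi, hsum⟩
    exact ⟨by rwa [hi, zero_add, hsum] at hsplit, fun ℓ hℓ hℓi => hℓ (hℓi ▸ hi)⟩
  · rintro ⟨hsum, hsupp⟩
    have hi : κ i = 0 := by_contra fun h => hsupp i h rfl
    have htotal : ∑ ℓ, κ ℓ = k := by rw [← hsplit, hi, zero_add, hsum]
    refine ⟨fun ℓ => Nat.lt_succ_of_le ?_, hi, htotal⟩
    exact htotal ▸ single_le_sum (fun _ _ => Nat.zero_le _) (mem_univ ℓ)

/-- The `k`-th derivative of `1/f̄ᵢ`, where `f̄ᵢ(x) = ∏_{ℓ≠i} (x - α_ℓ)^{d_ℓ}`,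
evaluated at `αᵢ`, equals
`(-1)^k k! ∑_{∑_{ℓ≠i} k_ℓ = k} ∏_{ℓ≠i} binom(d_ℓ-1+k_ℓ, k_ℓ)/(αᵢ-α_ℓ)^{d_ℓ+k_ℓ}`. -/
theorem iteratedDeriv_inv_fbar {m : ℕ} (α : Fin m → ℝ) (hα : Function.Injective α)
    (d : Fin m → ℕ) (hd : ∀ ℓ, 1 ≤ d ℓ) (i : Fin m) (k : ℕ) :
    iteratedDeriv k (fun x : ℝ => (∏ ℓ ∈ Finset.univ.erase i, (x - α ℓ) ^ (d ℓ))⁻¹) (α i) =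
      (-1 : ℝ) ^ k * (k.factorial : ℝ) *
        ∑ κ ∈ holeTuples m i k, ∏ ℓ ∈ Finset.univ.erase i,
          ((d ℓ - 1 + κ ℓ).choose (κ ℓ) : ℝ) / (α i - α ℓ) ^ (d ℓ + κ ℓ) := by
  have hsmooth : ∀ ℓ ∈ univ.erase i, ContDiffAt ℝ k (fun x => ((x - α ℓ) ^ d ℓ)⁻¹) (α i) :=
    fun ℓ hℓ => ((contDiffAt_id.sub contDiffAt_const).pow _).inv
      (pow_ne_zero _ (sub_ne_zero.mpr (hα.ne (ne_of_mem_erase hℓ).symm)))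
  have hleibniz := iteratedDeriv_finset_prod_div_factorial _ hsmooth
  rw [div_eq_iff (by positivity)] at hleibniz
  have hsummand : ∀ κ ∈ (univ.erase i).piAntidiag k,
      ∏ ℓ ∈ univ.erase i, iteratedDeriv (κ ℓ) (fun x => ((x - α ℓ) ^ d ℓ)⁻¹) (α i) / (κ ℓ)! =
        (-1) ^ k * ∏ ℓ ∈ univ.erase i,
          ((d ℓ - 1 + κ ℓ).choose (κ ℓ) : ℝ) / (α i - α ℓ) ^ (d ℓ + κ ℓ) := by
    intro κ hκ
    simp only [iteratedDeriv_inv_sub_pow_div_factorial _ _ (hd _), mul_div_assoc, prod_mul_distrib,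
      prod_pow_eq_pow_sum, (mem_piAntidiag.mp hκ).1]
  simp only [← prod_inv_distrib]
  rw [hleibniz, holeTuples_eq_piAntidiag, sum_congr rfl hsummand, ← mul_sum]
  ring
end

section
/- The entry of the inverse of the confluent Vandermonde matrix $V(\overline{A})$ in row indexed by $(i,j)$ (the $j$-th column of the block of $\alpha_i$, $0\le j<d_i$) and last column (column $d$) equals $\frac{1}{(d_i-1-j)!}\big(\frac{1}{\overline{f}_i}\big)^{(d_i-1-j)}(\alpha_i)$; in particular the row corresponding to $(i,0)$ gives $\frac{1}{(d_i-1)!}(1/\overline{f}_i)^{(d_i-1)}(\alpha_i)$. -/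
open Finset

/-- Entry helper for the confluent Vandermonde matrix: `binom(k,j) * a^(k-j)`,
with the convention that it is `0` when `k < j`. -/
def dcoef {K : Type*} [CommRing K] (k j : ℕ) (a : K) : K :=
  if j ≤ k then (k.choose j : K) * a ^ (k - j) else 0

/-- The position in `Fin (∑ i, d i)` of the `j`-th column of the `i`-th block. -/
def sigmaToFin {m : ℕ} (d : Fin m → ℕ) (p : Σ i, Fin (d i)) : Fin (∑ i, d i) :=
  ⟨∑ i ∈ Finset.univ.filter (fun i => i < p.1), d i + (p.2 : ℕ), by
    have h1 : (p.2 : ℕ) < d p.1 := p.2.isLt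
    have h2 : d p.1 + ∑ i ∈ Finset.univ.filter (fun i => i < p.1), d i ≤ ∑ i, d i := by
      rw [← Finset.sum_insert (by simp)]
      exact Finset.sum_le_sum_of_subset (Finset.subset_univ _)
    omega⟩

/-- The square confluent (generalized Vandermonde) matrix of points `α i` with
multiplicities `d i`. -/
def confVdm {K : Type*} [CommRing K] {m : ℕ} (α : Fin m → K) (d : Fin m → ℕ) :
    Matrix (Fin (∑ i, d i)) (Fin (∑ i, d i)) K :=
  Matrix.of fun k c =>
    ∑ p : Σ i, Fin (d i),
      if (sigmaToFin d p : ℕ) = (c : ℕ) then dcoef (k : ℕ) (p.2 : ℕ) (α p.1) else 0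

/-! Multiplying a coefficient row vector by column `(i, j)` of `V(Ā)` yields the `j`-th Taylor
coefficient at `αᵢ` of the corresponding polynomial. Hence the rows of `V(Ā)⁻¹` are the
coefficient vectors of the Hermite basis polynomials `Q_{ij}` of degree `< d` whose Taylor
coefficients at the nodes are dual to the columns. If `uᵢ` inverts `f̄ᵢ` modulo `(X - αᵢ)^{dᵢ}`,
then `Q_{ij} = f̄ᵢ · ((X - αᵢ)^j uᵢ mod (X - αᵢ)^{dᵢ})`. As `f̄ᵢ` is monic of degree `d - dᵢ`, the
last entry of the row is the Taylor coefficient of `uᵢ` at `αᵢ` of order `dᵢ - 1 - j`, and `uᵢ`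
agrees with `1/f̄ᵢ` to order `dᵢ` at `αᵢ`. -/

open Polynomial Topology

section ConfluentVandermonde

variable {K : Type*} [CommRing K] {m : ℕ}

lemma sigmaToFin_eq_finSigmaFinEquiv (d : Fin m → ℕ) : sigmaToFin d = finSigmaFinEquiv := by
  funext ⟨i, j⟩
  ext
  simp only [sigmaToFin, finSigmaFinEquiv_apply, add_left_inj]
  refine Eq.trans ?_ (Finset.sum_map univ (Fin.castLEEmb i.isLt.le) d)
  congr 1
  ext ℓ
  simp only [mem_filter, mem_univ, true_and, mem_map, Fin.castLEEmb_apply]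
  exact ⟨fun h => ⟨⟨ℓ, h⟩, rfl⟩, fun ⟨k, hk⟩ => hk ▸ k.isLt⟩

lemma sigmaToFin_injective (d : Fin m → ℕ) : Function.Injective (sigmaToFin d) := by
  rw [sigmaToFin_eq_finSigmaFinEquiv]
  exact finSigmaFinEquiv.injective

lemma dcoef_eq_choose_mul_pow (k j : ℕ) (a : K) :
    dcoef k j a = (k.choose j : K) * a ^ (k - j) := by
  unfold dcoef
  split_ifs with h
  · rfl
  · rw [Nat.choose_eq_zero_of_lt (not_le.mp h), Nat.cast_zero, zero_mul]

lemma confVdm_apply_sigmaToFin (α : Fin m → K) (d : Fin m → ℕ) (k : Fin (∑ i, d i))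
    (p : Σ i, Fin (d i)) : confVdm α d k (sigmaToFin d p) = dcoef k p.2 (α p.1) := by
  rw [confVdm, Matrix.of_apply, Finset.sum_eq_single_of_mem p (mem_univ p), if_pos rfl]
  intro q _ hqp
  rw [if_neg fun h => hqp (sigmaToFin_injective d (Fin.ext h))]

lemma sum_range_coeff_mul_dcoef {q : K[X]} {D : ℕ} (hq : q.natDegree < D) (j : ℕ) (a : K) :
    ∑ k ∈ range D, q.coeff k * dcoef k j a = (taylor a q).coeff j := by
  rw [taylor_coeff, hasseDeriv_apply, eval_sum, sum_over_range' _ (by simp) D hq]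
  refine Finset.sum_congr rfl fun k _ => ?_
  rw [eval_monomial, dcoef_eq_choose_mul_pow]
  ring

lemma confVdm_inv_apply_of_taylor_coeff (α : Fin m → K) (d : Fin m → ℕ)
    (Q : (Σ i, Fin (d i)) → K[X]) (hdeg : ∀ p, (Q p).natDegree < ∑ i, d i)
    (htaylor : ∀ p q, (taylor (α q.1) (Q p)).coeff q.2 = if p = q then 1 else 0)
    (p : Σ i, Fin (d i)) (c : Fin (∑ i, d i)) :
    (confVdm α d)⁻¹ (sigmaToFin d p) c = (Q p).coeff c := by
  rw [sigmaToFin_eq_finSigmaFinEquiv]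
  set e : (Σ i, Fin (d i)) ≃ Fin (∑ i, d i) := finSigmaFinEquiv
  have hW : Matrix.of (fun r k : Fin (∑ i, d i) => (Q (e.symm r)).coeff k) * confVdm α d = 1 := by
    ext r c
    obtain ⟨p, rfl⟩ := e.surjective r
    obtain ⟨q, rfl⟩ := e.surjective c
    simp only [Matrix.mul_apply, Matrix.one_apply, Equiv.apply_eq_iff_eq, Matrix.of_apply,
      Equiv.symm_apply_apply]
    rw [← htaylor p q, ← sum_range_coeff_mul_dcoef (hdeg p), ← Fin.sum_univ_eq_sum_range]
    simp only [e, ← sigmaToFin_eq_finSigmaFinEquiv, confVdm_apply_sigmaToFin]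
  rw [Matrix.inv_eq_left_inv hW, Matrix.of_apply, e.symm_apply_apply]

end ConfluentVandermonde

namespace Polynomial

variable {R : Type*} [CommRing R]

lemma taylor_X_sub_C (a : R) : taylor a (X - C a) = X := by
  rw [map_sub, taylor_X, taylor_C, add_sub_cancel_right]

lemma taylor_coeff_X_sub_C_pow (a : R) (j k : ℕ) :
    (taylor a ((X - C a) ^ j)).coeff k = if k = j then 1 else 0 := by
  rw [taylor_pow, taylor_X_sub_C, coeff_X_pow]

lemma taylor_coeff_eq_of_dvd_sub {p q : R[X]} {a : R} {N k : ℕ} (h : (X - C a) ^ N ∣ p - q)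
    (hk : k < N) : (taylor a p).coeff k = (taylor a q).coeff k := by
  obtain ⟨w, hw⟩ := h
  rw [← sub_eq_zero, ← coeff_sub, ← map_sub, hw, taylor_mul, taylor_pow, taylor_X_sub_C,
    coeff_X_pow_mul', if_neg (not_le.mpr hk)]

lemma taylor_coeff_eq_coeff_of_natDegree_le {p : R[X]} {e : ℕ} (a : R) (hp : p.natDegree ≤ e) :
    (taylor a p).coeff e = p.coeff e := by
  rcases hp.eq_or_lt with rfl | hlt
  · exact coeff_taylor_natDegree a p
  · rw [coeff_eq_zero_of_natDegree_lt hlt,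
      coeff_eq_zero_of_natDegree_lt (by rwa [natDegree_taylor])]

end Polynomial

section HermiteBasis

variable {K : Type*} [CommRing K] {m : ℕ} (α : Fin m → K) (d : Fin m → ℕ)

/-- The polynomial `f̄ᵢ` of the paper. -/
noncomputable def cofactor (i : Fin m) : K[X] :=
  ∏ ℓ ∈ univ.erase i, (X - C (α ℓ)) ^ d ℓ

lemma cofactor_monic (i : Fin m) : (cofactor α d i).Monic :=
  monic_prod_of_monic _ _ fun _ _ => (monic_X_sub_C _).pow _

lemma natDegree_cofactor_add [Nontrivial K] (i : Fin m) :
    (cofactor α d i).natDegree + d i = ∑ ℓ, d ℓ := by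
  rw [cofactor, natDegree_prod_of_monic _ _ fun _ _ => (monic_X_sub_C _).pow _]
  simp only [(monic_X_sub_C _).natDegree_pow, natDegree_X_sub_C, mul_one]
  exact sum_erase_add _ _ (mem_univ i)

lemma eval_cofactor (i : Fin m) (x : K) :
    (cofactor α d i).eval x = ∏ ℓ ∈ univ.erase i, (x - α ℓ) ^ d ℓ := by
  simp [cofactor, eval_prod]

lemma X_sub_C_pow_dvd_cofactor {i ℓ : Fin m} (h : ℓ ≠ i) :
    (X - C (α ℓ)) ^ d ℓ ∣ cofactor α d i :=
  dvd_prod_of_mem _ (mem_erase.mpr ⟨h, mem_univ ℓ⟩)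

lemma exists_X_sub_C_pow_dvd_mul_cofactor_sub_one {K : Type*} [Field K] {α : Fin m → K}
    (hα : Function.Injective α) (d : Fin m → ℕ) (i : Fin m) :
    ∃ u : K[X], (X - C (α i)) ^ d i ∣ u * cofactor α d i - 1 := by
  have hcop : IsCoprime ((X - C (α i)) ^ d i) (cofactor α d i) :=
    IsCoprime.prod_right fun ℓ hℓ =>
      (pairwise_coprime_X_sub_C hα (mem_erase.mp hℓ).1.symm).pow
  obtain ⟨A, u, h⟩ := hcop
  exact ⟨u, -A, by linear_combination h⟩

lemma natDegree_modByMonic_X_sub_C_pow_lt [Nontrivial K] (p : K[X]) (a : K) {N : ℕ}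
    (hN : N ≠ 0) : (p %ₘ (X - C a) ^ N).natDegree < N := by
  have hmonic : ((X - C a) ^ N).Monic := (monic_X_sub_C a).pow N
  have hdeg : ((X - C a) ^ N).natDegree = N := by
    rw [(monic_X_sub_C a).natDegree_pow, natDegree_X_sub_C, mul_one]
  have hne : (X - C a) ^ N ≠ 1 := fun h => hN (by rw [← hdeg, h, natDegree_one])
  simpa only [hdeg] using natDegree_modByMonic_lt p hmonic hne

/-- The Hermite interpolation basis polynomial of the column `p = (i, j)`, provided `u i`
inverts `f̄ᵢ` modulo `(X - αᵢ)^{dᵢ}`. -/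
noncomputable def hermiteBasis (u : Fin m → K[X]) (p : Σ i, Fin (d i)) : K[X] :=
  cofactor α d p.1 * (((X - C (α p.1)) ^ (p.2 : ℕ) * u p.1) %ₘ (X - C (α p.1)) ^ d p.1)

variable {α d} {u : Fin m → K[X]}

lemma natDegree_hermiteBasis_lt [Nontrivial K] (p : Σ i, Fin (d i)) :
    (hermiteBasis α d u p).natDegree < ∑ ℓ, d ℓ := by
  have h₁ := natDegree_cofactor_add α d p.1
  have h₂ := natDegree_modByMonic_X_sub_C_pow_lt ((X - C (α p.1)) ^ (p.2 : ℕ) * u p.1) (α p.1)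
    (Nat.ne_zero_of_lt p.2.isLt)
  exact natDegree_mul_le.trans_lt (by omega)

lemma X_sub_C_pow_dvd_hermiteBasis_sub (hu : ∀ i, (X - C (α i)) ^ d i ∣ u i * cofactor α d i - 1)
    (p : Σ i, Fin (d i)) :
    (X - C (α p.1)) ^ d p.1 ∣ hermiteBasis α d u p - (X - C (α p.1)) ^ (p.2 : ℕ) := by
  obtain ⟨i, j⟩ := p
  have hmod := dvd_modByMonic_sub ((X - C (α i)) ^ (j : ℕ) * u i) ((X - C (α i)) ^ d i)
  have hsplit : hermiteBasis α d u ⟨i, j⟩ - (X - C (α i)) ^ (j : ℕ) =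
      cofactor α d i * (((X - C (α i)) ^ (j : ℕ) * u i) %ₘ (X - C (α i)) ^ d i -
        (X - C (α i)) ^ (j : ℕ) * u i) + (X - C (α i)) ^ (j : ℕ) * (u i * cofactor α d i - 1) := by
    rw [hermiteBasis]
    ring
  rw [hsplit]
  exact dvd_add (hmod.mul_left _) ((hu i).mul_left _)

lemma taylor_coeff_hermiteBasis (hu : ∀ i, (X - C (α i)) ^ d i ∣ u i * cofactor α d i - 1)
    (p q : Σ i, Fin (d i)) :
    (taylor (α q.1) (hermiteBasis α d u p)).coeff q.2 = if p = q then 1 else 0 := by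
  obtain ⟨i, j⟩ := p
  obtain ⟨i', j'⟩ := q
  by_cases h : i' = i
  · subst h
    rw [taylor_coeff_eq_of_dvd_sub (X_sub_C_pow_dvd_hermiteBasis_sub hu ⟨i', j⟩) j'.isLt,
      taylor_coeff_X_sub_C_pow]
    simp [Fin.ext_iff, eq_comm]
  · have hdvd : (X - C (α i')) ^ d i' ∣ hermiteBasis α d u ⟨i, j⟩ - 0 := by
      rw [sub_zero]
      exact dvd_mul_of_dvd_left (X_sub_C_pow_dvd_cofactor α d h) _
    rw [taylor_coeff_eq_of_dvd_sub hdvd j'.isLt, map_zero, coeff_zero, if_neg]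
    exact fun hp => h (congrArg Sigma.fst hp).symm

lemma coeff_hermiteBasis_sum_sub_one [Nontrivial K] (i : Fin m) (j : Fin (d i)) :
    (hermiteBasis α d u ⟨i, j⟩).coeff ((∑ ℓ, d ℓ) - 1) =
      (taylor (α i) (u i)).coeff (d i - 1 - j) := by
  set g := ((X - C (α i)) ^ (j : ℕ) * u i) %ₘ (X - C (α i)) ^ d i
  have hg : g.natDegree ≤ d i - 1 := Nat.le_sub_one_of_lt <|
    natDegree_modByMonic_X_sub_C_pow_lt _ (α i) (Nat.ne_zero_of_lt j.isLt)
  have hsum : (∑ ℓ, d ℓ) - 1 = (cofactor α d i).natDegree + (d i - 1) := by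
    have := natDegree_cofactor_add α d i
    have := j.isLt
    omega
  rw [hsum, hermiteBasis, coeff_mul_add_eq_of_natDegree_le le_rfl hg,
    (cofactor_monic α d i).coeff_natDegree, one_mul,
    ← taylor_coeff_eq_coeff_of_natDegree_le (α i) hg,
    taylor_coeff_eq_of_dvd_sub (dvd_modByMonic_sub _ _) (Nat.sub_one_lt_of_lt j.isLt),
    taylor_mul, taylor_pow, taylor_X_sub_C, coeff_X_pow_mul', if_pos (by omega)]

end HermiteBasis

section Derivatives

variable {𝕜 : Type*} [NontriviallyNormedField 𝕜]

lemma Polynomial.iteratedDeriv_eval (p : 𝕜[X]) (n : ℕ) :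
    iteratedDeriv n (fun x => p.eval x) = fun x => (derivative^[n] p).eval x := by
  induction n generalizing p with
  | zero => rfl
  | succ n ih =>
    have hderiv : deriv (fun x => p.eval x) = fun x => (derivative p).eval x := by
      ext x
      exact p.deriv
    rw [iteratedDeriv_succ', hderiv, ih, Function.iterate_succ_apply]

lemma Polynomial.contDiff_eval (p : 𝕜[X]) (n : WithTop ℕ∞) :
    ContDiff 𝕜 n fun x => p.eval x := by
  simpa using p.contDiff_aeval (𝕜 := 𝕜) n

lemma iteratedDeriv_sub_pow_mul_eq_zero {ψ : 𝕜 → 𝕜} {a : 𝕜} {n N : ℕ}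
    (hψ : ContDiffAt 𝕜 n ψ a) (hn : n < N) :
    iteratedDeriv n (fun x => (x - a) ^ N * ψ x) a = 0 := by
  rw [iteratedDeriv_fun_mul (by fun_prop) hψ]
  refine sum_eq_zero fun k hk => ?_
  have hkN : k < N := (Nat.lt_succ_iff.mp (mem_range.mp hk)).trans_lt hn
  simp [iteratedDeriv_comp_sub_const (f := fun x => x ^ N), Nat.sub_ne_zero_of_lt hkN]

lemma iteratedDeriv_inv_eval_eq {f u : 𝕜[X]} {a : 𝕜} {N n : ℕ}
    (hu : (X - C a) ^ N ∣ u * f - 1) (hn : n < N) :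
    iteratedDeriv n (fun x => (f.eval x)⁻¹) a = (derivative^[n] u).eval a := by
  obtain ⟨r, hr⟩ := hu
  have hr_eval (x : 𝕜) : u.eval x * f.eval x - 1 = (x - a) ^ N * r.eval x := by
    simpa using congrArg (eval x) hr
  have hfa : f.eval a ≠ 0 := fun h => by
    simpa [h, zero_pow (Nat.ne_zero_of_lt hn)] using hr_eval a
  have hlocal : (fun x => (f.eval x)⁻¹) =ᶠ[𝓝 a]
      fun x => u.eval x + (x - a) ^ N * -(r.eval x / f.eval x) := by
    filter_upwards [f.continuous.continuousAt.eventually_ne hfa] with x hx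
    rw [mul_neg, ← mul_div_assoc, ← hr_eval x, sub_div, mul_div_cancel_right₀ _ hx, one_div]
    ring
  have hψ : ContDiffAt 𝕜 n (fun x => -(r.eval x / f.eval x)) a :=
    ((contDiff_eval r n).contDiffAt.div (contDiff_eval f n).contDiffAt hfa).neg
  rw [hlocal.iteratedDeriv_eq, iteratedDeriv_fun_add (contDiff_eval u n).contDiffAt
    (by fun_prop), iteratedDeriv_sub_pow_mul_eq_zero hψ hn, add_zero, iteratedDeriv_eval]

lemma taylor_coeff_eq_inv_factorial_mul_iteratedDeriv [CharZero 𝕜] {f u : 𝕜[X]} {a : 𝕜}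
    {N n : ℕ} (hu : (X - C a) ^ N ∣ u * f - 1) (hn : n < N) :
    (taylor a u).coeff n = (n.factorial : 𝕜)⁻¹ * iteratedDeriv n (fun x => (f.eval x)⁻¹) a := by
  rw [iteratedDeriv_inv_eval_eq hu hn, ← factorial_smul_hasseDeriv, LinearMap.smul_apply,
    eval_smul, nsmul_eq_mul, inv_mul_cancel_left₀ (Nat.cast_ne_zero.mpr n.factorial_ne_zero),
    taylor_coeff]

end Derivatives

/-- The entry of `V(Ā)⁻¹` in the row indexed by the pair `(i,j)` (the `j`-th column of
the block of `αᵢ`) and the last column equals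
`(1/(dᵢ-1-j)!) (1/f̄ᵢ)^{(dᵢ-1-j)}(αᵢ)`, where `f̄ᵢ(x) = ∏_{ℓ≠i} (x-α_ℓ)^{d_ℓ}`. -/
theorem confVdm_inv_last_col {m : ℕ} (α : Fin m → ℝ) (hα : Function.Injective α)
    (dd : Fin m → ℕ) (hpos : 0 < ∑ ℓ, dd ℓ)
    (i : Fin m) (j : Fin (dd i)) :
    (confVdm α dd)⁻¹ (sigmaToFin dd ⟨i, j⟩) ⟨(∑ ℓ, dd ℓ) - 1, by omega⟩ =
      ((dd i - 1 - (j : ℕ)).factorial : ℝ)⁻¹ *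
        iteratedDeriv (dd i - 1 - (j : ℕ))
          (fun x : ℝ => (∏ ℓ ∈ Finset.univ.erase i, (x - α ℓ) ^ (dd ℓ))⁻¹) (α i) := by
  choose u hu using exists_X_sub_C_pow_dvd_mul_cofactor_sub_one hα dd
  rw [confVdm_inv_apply_of_taylor_coeff α dd (hermiteBasis α dd u) natDegree_hermiteBasis_lt
      (taylor_coeff_hermiteBasis hu), coeff_hermiteBasis_sum_sub_one,
    taylor_coeff_eq_inv_factorial_mul_iteratedDeriv (hu i) (by omega)]
  simp only [eval_cofactor]
end
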